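/- In a binary matroid M, every flat of rank r(M) - 2 is contained in at most three hyperplanes. -/

import Mathlib

open Set

variable {α : Type*}

/-- A circuit: a minimal dependent set. -/
def IsCircuit (M : Matroid α) (C : Set α) : Prop :=
  M.Dep C ∧ ∀ D, D ⊂ C → M.Indep D

/-- `C` is the fundamental circuit of `x` with respect to the basis `B`:
the unique circuit contained in `B ∪ {x}`. -/
def IsFundCct (M : Matroid α) (C : Set α) (x : α) (B : Set α) : Prop :=
  IsCircuit M C ∧ x ∈ C ∧ C ⊆ insert x B

/-- `SymEx M a A B` : the elements `b ∈ B` such that `A - a + b` and `B - b + a` are bases. -/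
def SymEx (M : Matroid α) (a : α) (A B : Set α) : Set α :=
  {b ∈ B | M.IsBase (insert b (A \ {a})) ∧ M.IsBase (insert a (B \ {b}))}

/-- `ConnEx M a a' A B` : the elements `b ∈ B` such that `A - a' + b` and `B - b + a` are bases. -/
def ConnEx (M : Matroid α) (a a' : α) (A B : Set α) : Set α :=
  {b ∈ B | M.IsBase (insert b (A \ {a'})) ∧ M.IsBase (insert a (B \ {b}))}

/-- A binary matroid, via the circuit characterization: the symmetric difference of
any two distinct circuits contains a circuit. -/
def Binary (M : Matroid α) : Prop :=
  ∀ C₁ C₂, IsCircuit M C₁ → IsCircuit M C₂ → C₁ ≠ C₂ →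
    ∃ C, IsCircuit M C ∧ C ⊆ symmDiff C₁ C₂

/-- A hyperplane: a maximal proper flat. -/
def IsHyperplane (M : Matroid α) (H : Set α) : Prop :=
  M.IsFlat H ∧ H ≠ M.E ∧ ∀ F, M.IsFlat F → H ⊂ F → F = M.E


/-! Every hyperplane `H ⊇ F` equals `cl (B₀ ∪ {z})` for each of its elements `z ∉ F`, by a rank
count. So the hyperplanes through `x` or `y` are `cl (B₀ ∪ {x})` and `cl (B₀ ∪ {y})`. For any other
one, `H = cl (B₀ ∪ {z})`, the fundamental circuit `C_z` of `z` in the base `B₀ ∪ {x, y}` contains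
both `x` and `y`, since otherwise `y` or `x` would lie in `H`. Given two such hyperplanes through
`z` and `z'`, binarity yields a circuit inside `C_z ∆ C_z' ⊆ B₀ ∪ {z, z'}`; it must contain `z'`,
so `z' ∈ cl (B₀ ∪ {z})` and the two hyperplanes coincide. -/

lemma isCircuit_iff_matroid_isCircuit {M : Matroid α} {C : Set α} :
    IsCircuit M C ↔ M.IsCircuit C := by
  rw [Matroid.isCircuit_iff_forall_ssubset]
  rfl

lemma Binary.exists_isCircuit_subset_symmDiff {M : Matroid α} {C₁ C₂ : Set α} (hM : Binary M)
    (hC₁ : M.IsCircuit C₁) (hC₂ : M.IsCircuit C₂) (hne : C₁ ≠ C₂) :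
    ∃ C, M.IsCircuit C ∧ C ⊆ symmDiff C₁ C₂ := by
  simp_rw [← isCircuit_iff_matroid_isCircuit] at hC₁ hC₂ ⊢
  exact hM C₁ C₂ hC₁ hC₂ hne

lemma Matroid.IsBase.eRank_eq_encard_add_two {M : Matroid α} {I : Set α} {x y : α}
    (hB : M.IsBase (insert x (insert y I))) (hx : x ∉ I) (hy : y ∉ I) (hxy : x ≠ y) :
    M.eRank = I.encard + 2 := by
  rw [← hB.encard_eq_eRank, encard_insert_of_notMem (by simp [hxy, hx]),
    encard_insert_of_notMem hy, add_assoc, one_add_one_eq_two]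

section Hyperplane

variable {M : Matroid α} [M.RankFinite] {H I : Set α} {z : α}

lemma IsHyperplane.eq_closure_of_indep (hH : IsHyperplane M H) (hI : M.Indep I) (hIH : I ⊆ H)
    (hrk : M.eRank ≤ I.encard + 1) : H = M.closure I := by
  refine subset_antisymm (fun u huH ↦ by_contra fun hu ↦ hH.2.1 ?_) ?_
  · have huI : u ∉ I := fun h ↦ hu (M.subset_closure I hI.subset_ground h)
    have hIu : M.Indep (insert u I) :=
      (hI.insert_indep_iff_of_notMem huI).2 ⟨hH.1.subset_ground huH, hu⟩
    have hbase : M.IsBase (insert u I) := hIu.isBase_of_eRk_ge hIu.finite <| by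
      rwa [hIu.eRk_eq_encard, encard_insert_of_notMem huI]
    refine hH.1.subset_ground.antisymm ?_
    rw [← hbase.closure_eq, ← hH.1.closure]
    exact M.closure_subset_closure (insert_subset huH hIH)
  · rw [← hH.1.closure]
    exact M.closure_subset_closure hIH

lemma IsHyperplane.eq_closure_insert (hH : IsHyperplane M H) (hI : M.Indep I)
    (hrk : M.eRank = I.encard + 2) (hIH : I ⊆ H) (hz : z ∈ H \ M.closure I) :
    H = M.closure (insert z I) := by
  have hzI : z ∉ I := fun h ↦ hz.2 (M.subset_closure I hI.subset_ground h)
  refine hH.eq_closure_of_indep ((hI.insert_indep_iff_of_notMem hzI).2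
    ⟨hH.1.subset_ground hz.1, hz.2⟩) (insert_subset hz.1 hIH) ?_
  rw [encard_insert_of_notMem hzI, hrk, add_assoc, one_add_one_eq_two]

lemma IsHyperplane.exists_mem_sdiff_closure (hH : IsHyperplane M H) (hI : M.Indep I)
    (hrk : M.eRank = I.encard + 2) (hIH : I ⊆ H) : ∃ z ∈ H, z ∉ M.closure I := by
  by_contra! hHI
  have hHeq : H = M.closure I :=
    subset_antisymm hHI (by rw [← hH.1.closure]; exact M.closure_subset_closure hIH)
  obtain ⟨u, huE, huH⟩ := exists_of_ssubset (hH.1.subset_ground.ssubset_of_ne hH.2.1)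
  have huI : u ∉ I := fun h ↦ huH (hIH h)
  have hIu : M.Indep (insert u I) :=
    (hI.insert_indep_iff_of_notMem huI).2 ⟨huE, hHeq ▸ huH⟩
  have hspan : M.closure (insert u I) = M.E := by
    refine hH.2.2 _ (M.isFlat_closure _) ⟨?_, fun h ↦ huH (h ?_)⟩
    · rw [hHeq]; exact M.closure_subset_closure (subset_insert u I)
    · exact M.subset_closure _ hIu.subset_ground (mem_insert u I)
  have hcard := (hIu.isBase_of_ground_subset_closure hspan.symm.subset).encard_eq_eRank
  rw [encard_insert_of_notMem huI, hrk] at hcard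
  obtain ⟨n, hn⟩ := ENat.ne_top_iff_exists.1 hI.finite.encard_lt_top.ne
  rw [← hn] at hcard
  norm_cast at hcard
  omega

end Hyperplane

lemma Matroid.IsBase.mem_fundCircuit_of_notMem_closure_insert {M : Matroid α} {I : Set α}
    {x y z : α} (hB : M.IsBase (insert x (insert y I))) (hxI : x ∉ I) (hxy : x ≠ y)
    (hzE : z ∈ M.E) (hzB : z ∉ insert x (insert y I)) (hzI : M.Indep (insert z I))
    (hy : y ∉ M.closure (insert z I)) : x ∈ M.fundCircuit z (insert x (insert y I)) := by
  have hzx : z ≠ x := by rintro rfl; exact hzB (mem_insert z _)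
  have hexchange : insert z (insert x (insert y I)) \ {x} = insert y (insert z I) := by
    ext e
    simp only [mem_sdiff, mem_insert_iff, mem_singleton_iff]
    grind
  rw [hB.indep.mem_fundCircuit_iff (by rwa [hB.closure_eq]) hzB, hexchange]
  exact (hzI.insert_indep_iff_of_notMem fun h ↦ hy (M.subset_closure _ hzI.subset_ground h)).2
    ⟨hB.subset_ground (mem_insert_of_mem x (mem_insert y I)), hy⟩

section Binary

variable {M : Matroid α} [M.RankFinite] {H H' I : Set α} {x y : α}

lemma IsHyperplane.exists_isCircuit_of_notMem (hH : IsHyperplane M H)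
    (hB : M.IsBase (insert x (insert y I))) (hx : x ∉ I) (hy : y ∉ I) (hxy : x ≠ y)
    (hIH : I ⊆ H) (hxH : x ∉ H) (hyH : y ∉ H) :
    ∃ z ∈ H \ M.closure I, ∃ C, M.IsCircuit C ∧ C ⊆ insert z (insert x (insert y I)) ∧
      z ∈ C ∧ x ∈ C ∧ y ∈ C := by
  have hI : M.Indep I := hB.indep.subset ((subset_insert y I).trans (subset_insert x _))
  have hrk := hB.eRank_eq_encard_add_two hx hy hxy
  obtain ⟨z, hzH, hzI⟩ := hH.exists_mem_sdiff_closure hI hrk hIH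
  have hzE : z ∈ M.E := hH.1.subset_ground hzH
  have hzB : z ∉ insert x (insert y I) := by
    rintro (rfl | rfl | h)
    exacts [hxH hzH, hyH hzH, hzI (M.subset_closure I hI.subset_ground h)]
  have hIz : M.Indep (insert z I) :=
    (hI.insert_indep_iff_of_notMem fun h ↦ hzB (mem_insert_of_mem x (mem_insert_of_mem y h))).2
      ⟨hzE, hzI⟩
  have hHz := hH.eq_closure_insert hI hrk hIH ⟨hzH, hzI⟩
  refine ⟨z, ⟨hzH, hzI⟩, M.fundCircuit z (insert x (insert y I)),
    hB.fundCircuit_isCircuit hzE hzB, M.fundCircuit_subset_insert z _, M.mem_fundCircuit z _,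
    hB.mem_fundCircuit_of_notMem_closure_insert hx hxy hzE hzB hIz (hHz ▸ hyH), ?_⟩
  rw [insert_comm] at hB hzB ⊢
  exact hB.mem_fundCircuit_of_notMem_closure_insert hy hxy.symm hzE hzB hIz (hHz ▸ hxH)

lemma Binary.eq_of_isHyperplane_of_notMem (hM : Binary M)
    (hB : M.IsBase (insert x (insert y I))) (hx : x ∉ I) (hy : y ∉ I) (hxy : x ≠ y)
    (hH : IsHyperplane M H) (hIH : I ⊆ H) (hxH : x ∉ H) (hyH : y ∉ H)
    (hH' : IsHyperplane M H') (hIH' : I ⊆ H') (hxH' : x ∉ H') (hyH' : y ∉ H') : H = H' := by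
  have hI : M.Indep I := hB.indep.subset ((subset_insert y I).trans (subset_insert x _))
  have hrk := hB.eRank_eq_encard_add_two hx hy hxy
  obtain ⟨z, ⟨hzH, hzI⟩, C, hC, hCsub, hzC, hxC, hyC⟩ :=
    hH.exists_isCircuit_of_notMem hB hx hy hxy hIH hxH hyH
  obtain ⟨z', ⟨hzH', hzI'⟩, C', hC', hCsub', hzC', hxC', hyC'⟩ :=
    hH'.exists_isCircuit_of_notMem hB hx hy hxy hIH' hxH' hyH'
  suffices hz'H : z' ∈ H by
    rw [hH.eq_closure_insert hI hrk hIH ⟨hz'H, hzI'⟩,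
      hH'.eq_closure_insert hI hrk hIH' ⟨hzH', hzI'⟩]
  by_contra hz'H
  have hCC' : C ≠ C' := by
    rintro rfl
    rcases hCsub hzC' with rfl | rfl | rfl | h
    exacts [hz'H hzH, hxH' hzH', hyH' hzH', hz'H (hIH h)]
  obtain ⟨D, hD, hDsub⟩ := hM.exists_isCircuit_subset_symmDiff hC hC' hCC'
  -- `x` and `y` cancel in the symmetric difference of the two fundamental circuits.
  have hDzz' : D ⊆ insert z' (insert z I) := fun e he ↦ by
    have heCC' := mem_symmDiff.1 (hDsub he)
    grind
  have hIz : M.Indep (insert z I) := (hI.insert_indep_iff_of_notMem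
    fun h ↦ hzI (M.subset_closure I hI.subset_ground h)).2 ⟨hH.1.subset_ground hzH, hzI⟩
  have hz'D : z' ∈ D := by
    by_contra hz'D
    exact hD.not_indep
      (hIz.subset fun e he ↦ (hDzz' he).resolve_left (ne_of_mem_of_not_mem he hz'D))
  have hDz : D \ {z'} ⊆ insert z I := fun e he ↦ (hDzz' he.1).resolve_left he.2
  refine hz'H (hH.1.closure ▸ M.closure_subset_closure (insert_subset hzH hIH) ?_)
  exact M.closure_subset_closure hDz (hD.mem_closure_sdiff_singleton_of_mem hz'D)

end Binary

theorem stmt_19_general (M : Matroid α) [M.Finite] {F B₀ : Set α} {x y : α}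
    (hM : Binary M) (hB₀ : M.IsBasis B₀ F)
    -- `F` has rank `r(M) - 2` : a basis of `F` extends to a basis of `M` by two elements
    (hx : x ∉ B₀) (hy : y ∉ B₀) (hxy : x ≠ y) (hfull : M.IsBase (insert x (insert y B₀))) :
    {H | IsHyperplane M H ∧ F ⊆ H}.encard ≤ 3 := by
  set S := {H | IsHyperplane M H ∧ F ⊆ H}
  set Hx := M.closure (insert x B₀)
  set Hy := M.closure (insert y B₀)
  have hrk := hfull.eRank_eq_encard_add_two hx hy hxy
  have hxF : x ∉ M.closure B₀ := ((hB₀.indep.insert_indep_iff_of_notMem hx).1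
    (hfull.indep.subset (insert_subset_insert (subset_insert _ _)))).2
  have hyF : y ∉ M.closure B₀ :=
    ((hB₀.indep.insert_indep_iff_of_notMem hy).1 (hfull.indep.subset (subset_insert _ _))).2
  have hothers : ∀ H ∈ S \ {Hx, Hy}, IsHyperplane M H ∧ B₀ ⊆ H ∧ x ∉ H ∧ y ∉ H := by
    rintro H ⟨⟨hH, hFH⟩, hHxy⟩
    simp only [mem_insert_iff, mem_singleton_iff, not_or] at hHxy
    have hB₀H : B₀ ⊆ H := hB₀.subset.trans hFH
    exact ⟨hH, hB₀H, fun hxH ↦ hHxy.1 (hH.eq_closure_insert hB₀.indep hrk hB₀H ⟨hxH, hxF⟩),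
      fun hyH ↦ hHxy.2 (hH.eq_closure_insert hB₀.indep hrk hB₀H ⟨hyH, hyF⟩)⟩
  have hrest : (S \ {Hx, Hy}).Subsingleton := fun H hH H' hH' ↦ by
    obtain ⟨hH, hB₀H, hxH, hyH⟩ := hothers H hH
    obtain ⟨hH', hB₀H', hxH', hyH'⟩ := hothers H' hH'
    exact hM.eq_of_isHyperplane_of_notMem hfull hx hy hxy hH hB₀H hxH hyH hH' hB₀H' hxH' hyH'
  calc S.encard ≤ (S \ {Hx, Hy}).encard + ({Hx, Hy} : Set (Set α)).encard :=
        encard_le_encard_sdiff_add_encard _ _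
    _ ≤ 1 + 2 := add_le_add (encard_le_one_iff_subsingleton.2 hrest)
          ((encard_insert_le _ _).trans (by rw [encard_singleton, one_add_one_eq_two]))
    _ = 3 := by norm_num

theorem stmt_19 (M : Matroid α) [M.Finite] {F B₀ : Set α} {x y : α}
    (hM : Binary M) (hF : M.IsFlat F) (hB₀ : M.IsBasis B₀ F)
    -- `F` has rank `r(M) - 2` : a basis of `F` extends to a basis of `M` by two elements
    (hx : x ∉ B₀) (hy : y ∉ B₀) (hxy : x ≠ y) (hfull : M.IsBase (insert x (insert y B₀))) :
    {H | IsHyperplane M H ∧ F ⊆ H}.encard ≤ 3 :=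
  stmt_19_general M hM hB₀ hx hy hxy hfull
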